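/- arXiv:2111.09277 — 2 statements merged into one kernel-verified Lean document; each statement's English description precedes it below -/
import Mathlib

section
/- Let p ∈ (1/2, 1), σ, τ > 0 with σ ≠ τ, and ε ∈ (0, 1/2]. Assume that for every dimension d ≥ 1 there exists k ≥ 0 with ℙ(‖σδ‖₂²/d ∈ [σ² − k, σ² + k]) = p. Then there exists a constant C > 0, depending only on p, σ, τ, ε and m₄, such that for every d ≥ 1, every c ∈ {0,1}, and every pair x, x′ ∈ ℝ^d with ‖x − x′‖₂ ≤ ε, the infimum of ℙ(f(x′ + τδ) = c), taken over all measurable functions f : ℝ^d → {0,1} satisfying ℙ(f(x + σδ) = c) = p, is at most C/d; equivalently, sup_{x,x′: ‖x−x′‖₂ ≤ ε} inf_{f measurable, ℙ(f(x+σδ)=c)=p} ℙ(f(x′+τδ)=c) ≤ C/d. -/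
/-!
Let `v = x' - x` and let `f` be the classifier that outputs `c` exactly on the spherical shell
`{z : ‖z - x‖² / d ∈ [σ² - k, σ² + k]}`, which by the choice of `k` has `ℙ(f(x + σδ) = c) = p`.
Since `‖δ‖² / d` concentrates at `1` with variance `η² / d` (Chebyshev), a shell of probability
`p < 1` must have half-width `k = O(1/√d)`; in particular `k ≤ |σ² - τ²| / 4` for large `d`.
On the other hand `‖v + τδ‖² = ‖v‖² + 2τ⟨v, δ⟩ + τ²‖δ‖²` concentrates at `τ² d`, at distance
`|σ² - τ²| d` from the shell; hitting the shell forces `⟨v, δ⟩` or `‖δ‖² - d` to deviate by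
order `d`, which by Chebyshev has probability `O(1/d)`. Small `d` are absorbed into `C`.
-/

open MeasureTheory ProbabilityTheory

theorem meas_ge_le_sum_variance_div_sq_pi {ι : Type*} [Fintype ι] {Ω : ι → Type*}
    {mΩ : ∀ i, MeasurableSpace (Ω i)} {μ : (i : ι) → Measure (Ω i)}
    [∀ i, IsProbabilityMeasure (μ i)] {X : Π i, Ω i → ℝ} (hX : ∀ i, MemLp (X i) 2 (μ i))
    {c : ℝ} (hc : 0 < c) :
    Measure.pi μ {ω | c ≤ |∑ i, X i (ω i) - ∑ i, ∫ t, X i t ∂μ i|}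
      ≤ ENNReal.ofReal ((∑ i, Var[X i; μ i]) / c ^ 2) := by
  have hXω (i : ι) : MemLp (fun ω : Π i, Ω i => X i (ω i)) 2 (Measure.pi μ) :=
    (hX i).comp_measurePreserving (measurePreserving_eval _ i)
  have hexp : ∫ ω, ∑ i, X i (ω i) ∂Measure.pi μ = ∑ i, ∫ t, X i t ∂μ i := by
    rw [integral_finsetSum _ fun i _ => (hXω i).integrable one_le_two]
    exact Finset.sum_congr rfl fun i _ => integral_comp_eval (hX i).aestronglyMeasurable
  have := meas_ge_le_variance_div_sq (memLp_finsetSum' Finset.univ fun i _ => hXω i) hc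
  simpa only [Finset.sum_apply, hexp, variance_sum_pi hX] using this

section Moments

variable {μ : Measure ℝ} [IsProbabilityMeasure μ] {d : ℕ} {c : ℝ}

theorem measure_pi_le_abs_sum_mul_le (hmean : ∫ t, t ∂μ = 0) (hvar : ∫ t, t ^ 2 ∂μ = 1)
    (v : Fin d → ℝ) (hc : 0 < c) :
    Measure.pi (fun _ : Fin d => μ) {δ | c ≤ |∑ i, v i * δ i|}
      ≤ ENNReal.ofReal ((∑ i, v i ^ 2) / c ^ 2) := by
  have hid : MemLp (fun t : ℝ => t) 2 μ :=
    (memLp_two_iff_integrable_sq aestronglyMeasurable_id).2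
      (.of_integral_ne_zero (by simp [hvar]))
  have hmean_mul (i : Fin d) : ∫ t, v i * t ∂μ = 0 := by rw [integral_const_mul, hmean, mul_zero]
  have hvar_mul (i : Fin d) : Var[fun t => v i * t; μ] = v i ^ 2 := by
    rw [variance_const_mul, variance_of_integral_eq_zero aemeasurable_id' hmean, hvar, mul_one]
  simpa only [hmean_mul, hvar_mul, Finset.sum_const_zero, sub_zero] using
    meas_ge_le_sum_variance_div_sq_pi (X := fun (i : Fin d) (t : ℝ) => v i * t)
      (fun i => hid.const_mul (v i)) hc

theorem measure_pi_le_abs_sum_sq_sub_le (hvar : ∫ t, t ^ 2 ∂μ = 1)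
    (hint : Integrable (fun t : ℝ => t ^ 4) μ) (hc : 0 < c) :
    Measure.pi (fun _ : Fin d => μ) {δ | c ≤ |∑ i, δ i ^ 2 - d|}
      ≤ ENNReal.ofReal (d * Var[fun t => t ^ 2; μ] / c ^ 2) := by
  have hsq : MemLp (fun t : ℝ => t ^ 2) 2 μ :=
    (memLp_two_iff_integrable_sq (by fun_prop)).2 (by simpa only [← pow_mul] using hint)
  simpa only [hvar, Finset.sum_const, Finset.card_univ, Fintype.card_fin, nsmul_eq_mul,
    mul_one] using
    meas_ge_le_sum_variance_div_sq_pi (X := fun (_ : Fin d) (t : ℝ) => t ^ 2) (fun _ => hsq) hc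

end Moments

theorem one_sub_mul_mul_sq_le_of_measure_band_eq {μ : Measure ℝ} [IsProbabilityMeasure μ]
    (hvar : ∫ t, t ^ 2 ∂μ = 1) (hint : Integrable (fun t : ℝ => t ^ 4) μ)
    {d : ℕ} (hd : 0 < d) {σ k p : ℝ} (hσ : σ ≠ 0) (hk : 0 ≤ k) (hp : 0 ≤ p)
    (hband : Measure.pi (fun _ : Fin d => μ)
      {δ | (σ ^ 2 * ∑ i, δ i ^ 2) / d ∈ Set.Icc (σ ^ 2 - k) (σ ^ 2 + k)} = ENNReal.ofReal p) :
    (1 - p) * d * k ^ 2 ≤ σ ^ 4 * Var[fun t => t ^ 2; μ] := by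
  rcases hk.eq_or_lt with rfl | hk
  · simpa using mul_nonneg (by positivity) (variance_nonneg _ _)
  have hd' : (0 : ℝ) < d := Nat.cast_pos.2 hd
  have hcompl : {δ : Fin d → ℝ | (σ ^ 2 * ∑ i, δ i ^ 2) / d ∈ Set.Icc (σ ^ 2 - k) (σ ^ 2 + k)}ᶜ
      ⊆ {δ | d * k / σ ^ 2 ≤ |∑ i, δ i ^ 2 - d|} := by
    intro δ hδ
    contrapose hδ
    simp only [Set.mem_ofPred_eq, not_le] at hδ
    simp only [Set.mem_compl_iff, Set.mem_ofPred_eq, not_not, ← Set.mem_Icc_iff_abs_le]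
    have : σ ^ 2 - (σ ^ 2 * ∑ i, δ i ^ 2) / d = -(σ ^ 2 / d * (∑ i, δ i ^ 2 - d)) := by
      field_simp
      ring
    rw [this, abs_neg, abs_mul, abs_of_pos (by positivity)]
    calc σ ^ 2 / d * |∑ i, δ i ^ 2 - d| ≤ σ ^ 2 / d * (d * k / σ ^ 2) := by gcongr
      _ = k := by field_simp
  have hone : 1 ≤ ENNReal.ofReal p
      + ENNReal.ofReal (d * Var[fun t => t ^ 2; μ] / (d * k / σ ^ 2) ^ 2) := calc
    1 = Measure.pi (fun _ : Fin d => μ) (_ ∪ _ᶜ) := by rw [Set.union_compl_self, measure_univ]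
    _ ≤ _ := measure_union_le _ _
    _ ≤ _ := add_le_add hband.le <| (measure_mono hcompl).trans <|
      measure_pi_le_abs_sum_sq_sub_le hvar hint (by positivity)
  rw [← ENNReal.ofReal_add hp
    (div_nonneg (mul_nonneg hd'.le (variance_nonneg _ _)) (sq_nonneg _)),
    ENNReal.one_le_ofReal] at hone
  have : d * Var[fun t => t ^ 2; μ] / (d * k / σ ^ 2) ^ 2
      = σ ^ 4 * Var[fun t => t ^ 2; μ] / (d * k ^ 2) := by
    field_simp
  rw [this, ← sub_le_iff_le_add', le_div_iff₀ (by positivity)] at hone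
  linarith

theorem shifted_band_subset_union {d : ℕ} (hd : 0 < d) {σ τ k : ℝ} (hτ : 0 < τ) {v : Fin d → ℝ}
    (hv : ∑ i, v i ^ 2 ≤ 1 / 4) (hk : k ≤ |σ ^ 2 - τ ^ 2| / 4) (hdΔ : 1 ≤ d * |σ ^ 2 - τ ^ 2|) :
    {δ : Fin d → ℝ | (∑ i, (v i + τ * δ i) ^ 2) / d ∈ Set.Icc (σ ^ 2 - k) (σ ^ 2 + k)}
      ⊆ {δ | d * |σ ^ 2 - τ ^ 2| / (8 * τ) ≤ |∑ i, v i * δ i|}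
        ∪ {δ | d * |σ ^ 2 - τ ^ 2| / (4 * τ ^ 2) ≤ |∑ i, δ i ^ 2 - d|} := by
  intro δ hδ
  by_contra! hsmall
  simp only [Set.mem_union, Set.mem_ofPred_eq, not_or, not_le] at hsmall
  obtain ⟨hL, hS⟩ := hsmall
  have hd' : (0 : ℝ) < d := Nat.cast_pos.2 hd
  rw [Set.mem_ofPred_eq, Set.mem_Icc, le_div_iff₀ hd', div_le_iff₀ hd'] at hδ
  have hexpand : ∑ i, (v i + τ * δ i) ^ 2
      = ∑ i, v i ^ 2 + 2 * τ * ∑ i, v i * δ i + τ ^ 2 * ∑ i, δ i ^ 2 := by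
    rw [Finset.sum_congr rfl fun i _ => (by ring : (v i + τ * δ i) ^ 2
      = v i ^ 2 + 2 * τ * (v i * δ i) + τ ^ 2 * δ i ^ 2)]
    simp only [Finset.sum_add_distrib, ← Finset.mul_sum]
  have hL' : |2 * τ * ∑ i, v i * δ i| < d * |σ ^ 2 - τ ^ 2| / 4 := by
    rw [abs_mul, abs_of_pos (by positivity)]
    rw [lt_div_iff₀ (by positivity)] at hL
    linarith
  have hS' : |τ ^ 2 * (∑ i, δ i ^ 2 - d)| < d * |σ ^ 2 - τ ^ 2| / 4 := by
    rw [abs_mul, abs_of_pos (by positivity)]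
    rw [lt_div_iff₀ (by positivity)] at hS
    linarith
  rw [abs_lt] at hL' hS'
  have hW : 0 ≤ ∑ i, v i ^ 2 := Finset.sum_nonneg fun i _ => sq_nonneg _
  have hkd : k * d ≤ d * |σ ^ 2 - τ ^ 2| / 4 := by nlinarith
  rcases abs_cases (σ ^ 2 - τ ^ 2) with ⟨hΔ, -⟩ | ⟨hΔ, -⟩ <;> rw [hΔ] at hdΔ hkd hL' hS' <;>
    linarith

theorem measure_shifted_band_le {μ : Measure ℝ} [IsProbabilityMeasure μ]
    (hmean : ∫ t, t ∂μ = 0) (hvar : ∫ t, t ^ 2 ∂μ = 1) (hint : Integrable (fun t : ℝ => t ^ 4) μ)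
    {d : ℕ} (hd : 0 < d) {σ τ k : ℝ} (hτ : 0 < τ) {v : Fin d → ℝ}
    (hv : ∑ i, v i ^ 2 ≤ 1 / 4) (hk : k ≤ |σ ^ 2 - τ ^ 2| / 4) (hdΔ : 1 ≤ d * |σ ^ 2 - τ ^ 2|) :
    Measure.pi (fun _ : Fin d => μ)
        {δ | (∑ i, (v i + τ * δ i) ^ 2) / d ∈ Set.Icc (σ ^ 2 - k) (σ ^ 2 + k)}
      ≤ ENNReal.ofReal
          (16 * τ ^ 2 * (1 + τ ^ 2 * Var[fun t => t ^ 2; μ]) / (|σ ^ 2 - τ ^ 2| ^ 2 * d)) := by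
  set Δ := |σ ^ 2 - τ ^ 2|
  set η2 := Var[fun t => t ^ 2; μ]
  have hd' : (0 : ℝ) < d := Nat.cast_pos.2 hd
  have hΔ : 0 < Δ := pos_of_mul_pos_right (zero_lt_one.trans_le hdΔ) hd'.le
  have harith : (∑ i, v i ^ 2) / (d * Δ / (8 * τ)) ^ 2 + d * η2 / (d * Δ / (4 * τ ^ 2)) ^ 2
      ≤ 16 * τ ^ 2 * (1 + τ ^ 2 * η2) / (Δ ^ 2 * d) := by
    have hW : 4 * (∑ i, v i ^ 2) / d ≤ 1 := by
      rw [div_le_one hd']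
      linarith [(Nat.one_le_cast (α := ℝ)).2 hd]
    calc _ = 16 * τ ^ 2 * (4 * (∑ i, v i ^ 2) / d + τ ^ 2 * η2) / (Δ ^ 2 * d) := by
          field_simp
          ring
      _ ≤ _ := by gcongr
  calc _ ≤ _ := measure_mono (shifted_band_subset_union hd hτ hv hk hdΔ)
    _ ≤ _ := measure_union_le _ _
    _ ≤ _ := add_le_add (measure_pi_le_abs_sum_mul_le hmean hvar v (by positivity))
      (measure_pi_le_abs_sum_sq_sub_le hvar hint (by positivity))
    _ = _ := (ENNReal.ofReal_add (by positivity)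
      (div_nonneg (mul_nonneg hd'.le (variance_nonneg _ _)) (sq_nonneg _))).symm
    _ ≤ _ := ENNReal.ofReal_le_ofReal harith

theorem exists_measurable_eq_iff_mem {α : Type*} [MeasurableSpace α] {A : Set α}
    (hA : MeasurableSet A) (c : Bool) : ∃ f : α → Bool, Measurable f ∧ ∀ z, f z = c ↔ z ∈ A := by
  classical
  exact ⟨fun z => if z ∈ A then c else !c, Measurable.ite hA measurable_const measurable_const,
    fun z => by by_cases h : z ∈ A <;> simp [h]⟩

theorem measure_le_ofReal_add_div_of_le {Ω : Type*} [MeasurableSpace Ω] {ν : Measure Ω}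
    [IsProbabilityMeasure ν] {s : Set Ω} {B N d : ℝ} (hd : 0 < d) (hB : 0 ≤ B) (hN : 0 ≤ N)
    (h : N ≤ d → ν s ≤ ENNReal.ofReal (B / d)) : ν s ≤ ENNReal.ofReal ((B + N) / d) := by
  by_cases hNd : N ≤ d
  · exact (h hNd).trans (ENNReal.ofReal_le_ofReal (by gcongr; linarith))
  · refine prob_le_one.trans ?_
    rw [ENNReal.one_le_ofReal, one_le_div hd]
    linarith

theorem iInf_measure_le_measure_shifted_band {μ : Measure ℝ} {d : ℕ} (x x' : Fin d → ℝ)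
    {σ τ k p : ℝ} (c : Bool)
    (hkp : (Measure.pi fun _ : Fin d => μ)
      {δ | (σ ^ 2 * ∑ i, (δ i) ^ 2) / (d : ℝ) ∈ Set.Icc (σ ^ 2 - k) (σ ^ 2 + k)}
        = ENNReal.ofReal p) :
    (⨅ f : {f : (Fin d → ℝ) → Bool // Measurable f ∧
          (Measure.pi fun _ : Fin d => μ) {δ | f (x + σ • δ) = c} = ENNReal.ofReal p},
        (Measure.pi fun _ : Fin d => μ) {δ | f.1 (x' + τ • δ) = c})
      ≤ (Measure.pi fun _ : Fin d => μ)
        {δ | (∑ i, (x' i - x i + τ * δ i) ^ 2) / (d : ℝ) ∈ Set.Icc (σ ^ 2 - k) (σ ^ 2 + k)} := by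
  obtain ⟨f, hf, hfc⟩ := exists_measurable_eq_iff_mem (c := c)
    (A := {z : Fin d → ℝ | (∑ i, (z i - x i) ^ 2) / d ∈ Set.Icc (σ ^ 2 - k) (σ ^ 2 + k)})
    (measurableSet_Icc.preimage (by fun_prop))
  have hfx : {δ | f (x + σ • δ) = c}
      = {δ | (σ ^ 2 * ∑ i, (δ i) ^ 2) / (d : ℝ) ∈ Set.Icc (σ ^ 2 - k) (σ ^ 2 + k)} := by
    ext δ
    simp [hfc, mul_pow, Finset.mul_sum]
  have hfx' : {δ | f (x' + τ • δ) = c}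
      = {δ | (∑ i, (x' i - x i + τ * δ i) ^ 2) / (d : ℝ) ∈ Set.Icc (σ ^ 2 - k) (σ ^ 2 + k)} := by
    ext δ
    simp [hfc, add_sub_right_comm]
  rw [← hfx']
  exact iInf_le_of_le ⟨f, hf, hfx ▸ hkp⟩ le_rfl

theorem curse_of_dimensionality_input_dependent_smoothing_general
    (μ : Measure ℝ) [IsProbabilityMeasure μ]
    (hmean : ∫ t, t ∂μ = 0) (hvar : ∫ t, t ^ 2 ∂μ = 1)
    (hint : Integrable (fun t : ℝ => t ^ 4) μ)
    (p σ τ ε : ℝ)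
    (hp : p ∈ Set.Ioo (1 / 2 : ℝ) 1) (hσ : 0 < σ) (hτ : 0 < τ) (hστ : σ ≠ τ)
    (hε : ε ∈ Set.Ioc (0 : ℝ) (1 / 2))
    (hk : ∀ d : ℕ, 1 ≤ d → ∃ k : ℝ, 0 ≤ k ∧
      (Measure.pi fun _ : Fin d => μ)
        {δ | (σ ^ 2 * ∑ i, (δ i) ^ 2) / (d : ℝ) ∈ Set.Icc (σ ^ 2 - k) (σ ^ 2 + k)}
        = ENNReal.ofReal p) :
    ∃ C : ℝ, 0 < C ∧ ∀ d : ℕ, 1 ≤ d → ∀ c : Bool, ∀ x x' : Fin d → ℝ,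
      Real.sqrt (∑ i, (x i - x' i) ^ 2) ≤ ε →
      (⨅ f : {f : (Fin d → ℝ) → Bool // Measurable f ∧
            (Measure.pi fun _ : Fin d => μ) {δ | f (x + σ • δ) = c} = ENNReal.ofReal p},
          (Measure.pi fun _ : Fin d => μ) {δ | f.1 (x' + τ • δ) = c})
        ≤ ENNReal.ofReal (C / (d : ℝ)) := by
  set Δ := |σ ^ 2 - τ ^ 2|
  set η2 := Var[fun t => t ^ 2; μ]
  have hΔ : 0 < Δ := abs_pos.2 (sub_ne_zero.2 fun h => hστ ((sq_eq_sq₀ hσ.le hτ.le).1 h))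
  have hB : 0 ≤ 16 * τ ^ 2 * (1 + τ ^ 2 * η2) / Δ ^ 2 := by
    have := variance_nonneg (fun t : ℝ => t ^ 2) μ
    positivity
  set d₀ := 16 * σ ^ 4 * η2 / ((1 - p) * Δ ^ 2)
  have hN : 0 < max d₀ Δ⁻¹ := lt_max_of_lt_right (inv_pos.2 hΔ)
  refine ⟨_ + max d₀ Δ⁻¹, add_pos_of_nonneg_of_pos hB hN, fun d hd c x x' hxx' => ?_⟩
  obtain ⟨k, hk0, hkp⟩ := hk d hd
  refine (iInf_measure_le_measure_shifted_band x x' c hkp).trans <|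
    measure_le_ofReal_add_div_of_le (Nat.cast_pos.2 hd) hB hN.le fun hdN => ?_
  have hk_small : k ≤ Δ / 4 := by
    have hk2 := one_sub_mul_mul_sq_le_of_measure_band_eq hvar hint hd hσ.ne' hk0
      (by linarith [hp.1]) hkp
    have hd₀ : d₀ ≤ d := (le_max_left _ _).trans hdN
    rw [div_le_iff₀ (mul_pos (by linarith [hp.2]) (by positivity))] at hd₀
    have : 0 < (1 - p) * d := mul_pos (by linarith [hp.2]) (Nat.cast_pos.2 hd)
    exact (abs_le_of_sq_le_sq' (by nlinarith) (by positivity)).2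
  have hv : ∑ i, (x' i - x i) ^ 2 ≤ 1 / 4 := by
    rw [Real.sqrt_le_left hε.1.le] at hxx'
    calc ∑ i, (x' i - x i) ^ 2 = ∑ i, (x i - x' i) ^ 2 :=
          Finset.sum_congr rfl fun i _ => by ring
      _ ≤ ε ^ 2 := hxx'
      _ ≤ 1 / 4 := by nlinarith [hε.1, hε.2]
  have hdΔ : 1 ≤ d * Δ := (inv_le_iff_one_le_mul₀ hΔ).1 ((le_max_right _ _).trans hdN)
  calc _ ≤ _ := measure_shifted_band_le hmean hvar hint hd hτ (v := fun i => x' i - x i) hv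
        hk_small hdΔ
    _ = _ := by rw [div_div]

/-- Theorem 1 (curse of dimensionality for input-dependent randomized smoothing).
`δ : Fin d → ℝ` has law `μ^⊗d` with `μ` of zero mean, unit variance and fourth moment `m₄`.
Let `p ∈ (1/2, 1)`, `σ, τ > 0` with `σ ≠ τ`, `ε ∈ (0, 1/2]`. Assume for every `d ≥ 1` there is
`k ≥ 0` with `ℙ(‖σδ‖₂²/d ∈ [σ² − k, σ² + k]) = p`. Then there is `C > 0` such that for every
`d ≥ 1`, every `c ∈ {0,1}` (encoded by `Bool`), and all `x, x'` with `‖x − x'‖₂ ≤ ε`,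
the infimum over measurable classifiers `f : ℝ^d → {0,1}` with `ℙ(f(x + σδ) = c) = p` of
`ℙ(f(x' + τδ) = c)` is at most `C/d`. -/
theorem curse_of_dimensionality_input_dependent_smoothing
    (μ : Measure ℝ) [IsProbabilityMeasure μ]
    (hmean : ∫ t, t ∂μ = 0) (hvar : ∫ t, t ^ 2 ∂μ = 1)
    (hint : Integrable (fun t : ℝ => t ^ 4) μ)
    (m₄ : ℝ) (hm₄ : ∫ t, t ^ 4 ∂μ = m₄)
    (p σ τ ε : ℝ)
    (hp : p ∈ Set.Ioo (1 / 2 : ℝ) 1) (hσ : 0 < σ) (hτ : 0 < τ) (hστ : σ ≠ τ)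
    (hε : ε ∈ Set.Ioc (0 : ℝ) (1 / 2))
    (hk : ∀ d : ℕ, 1 ≤ d → ∃ k : ℝ, 0 ≤ k ∧
      (Measure.pi fun _ : Fin d => μ)
        {δ | (σ ^ 2 * ∑ i, (δ i) ^ 2) / (d : ℝ) ∈ Set.Icc (σ ^ 2 - k) (σ ^ 2 + k)}
        = ENNReal.ofReal p) :
    ∃ C : ℝ, 0 < C ∧ ∀ d : ℕ, 1 ≤ d → ∀ c : Bool, ∀ x x' : Fin d → ℝ,
      Real.sqrt (∑ i, (x i - x' i) ^ 2) ≤ ε →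
      (⨅ f : {f : (Fin d → ℝ) → Bool // Measurable f ∧
            (Measure.pi fun _ : Fin d => μ) {δ | f (x + σ • δ) = c} = ENNReal.ofReal p},
          (Measure.pi fun _ : Fin d => μ) {δ | f.1 (x' + τ • δ) = c})
        ≤ ENNReal.ofReal (C / (d : ℝ)) :=
  curse_of_dimensionality_input_dependent_smoothing_general μ hmean hvar hint p σ τ ε hp hσ hτ hστ
    hε hk
end

section
/- Let p ∈ (1/2, 1), σ, τ > 0 with σ ≠ τ, and ε ∈ (0, 1/2]. Assume that for every dimension d ≥ 1 there exists k ≥ 0 with ℙ(‖σδ‖₂²/d ∈ [σ² − k, σ² + k]) = p. Then there exists a constant C > 0, depending only on p, σ, τ, ε and m₄, such that for every d ≥ 1 and every z ∈ ℝ^d with ‖z‖₂ ≤ ε, the infimum of ℙ(τδ + z ∈ U), taken over all Borel sets U ⊆ ℝ^d satisfying ℙ(σδ ∈ U) = p, is at most C/d. -/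
/-!
The witness is the shell `U = {u | |‖u‖²/d - σ²| ≤ k}` given by the hypothesis. With independent
coordinates of finite fourth moment, `‖τδ + z‖²` is a sum of `d` independent terms of variance
`O(1)`, so by Chebyshev it leaves a window of width `c·d` around its mean `dτ² + ‖z‖²` with
probability `O(1/d)`. For `σδ`, which falls outside `U` with probability `1 - p > 0`, this forces
`k < |σ² - τ²|/4` once `d` is large; then `τδ + z ∈ U` puts `‖τδ + z‖²` at distance at least
`d|σ² - τ²|/2` from its mean, an event of probability `O(1/d)`. Small `d` go into the constant.
-/

open MeasureTheory ProbabilityTheory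

section Chebyshev

variable {ι : Type*} [Fintype ι] {Ω : ι → Type*} {mΩ : ∀ i, MeasurableSpace (Ω i)}
  {μ : (i : ι) → Measure (Ω i)} [∀ i, IsProbabilityMeasure (μ i)]

theorem measure_pi_ge_le_sum_variance_div_sq {g : (i : ι) → Ω i → ℝ}
    (hg : ∀ i, MemLp (g i) 2 (μ i)) {c : ℝ} (hc : 0 < c) :
    Measure.pi μ {x | c ≤ |∑ i, g i (x i) - ∑ i, ∫ t, g i t ∂μ i|}
      ≤ ENNReal.ofReal ((∑ i, Var[g i; μ i]) / c ^ 2) := by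
  have hg' : ∀ i, MemLp (fun x : (i : ι) → Ω i => g i (x i)) 2 (Measure.pi μ) :=
    fun i => (hg i).comp_measurePreserving (measurePreserving_eval μ i)
  have hS := memLp_finsetSum' Finset.univ fun i _ => hg' i
  have hmean : ∫ x, ∑ i, g i (x i) ∂Measure.pi μ = ∑ i, ∫ t, g i t ∂μ i := by
    rw [integral_finsetSum _ fun i _ => (hg' i).integrable one_le_two]
    exact Finset.sum_congr rfl fun i _ => integral_comp_eval (hg i).aestronglyMeasurable
  rw [← variance_sum_pi hg, ← hmean]
  convert meas_ge_le_variance_div_sq hS hc using 4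
  simp

end Chebyshev

lemma prob_le_ofReal_div_of_le {Ω : Type*} [MeasurableSpace Ω] {ν : Measure Ω}
    [IsProbabilityMeasure ν] {s : Set Ω} {d C : ℝ} (hd : 0 < d) (hdC : d ≤ C) :
    ν s ≤ ENNReal.ofReal (C / d) :=
  prob_le_one.trans <| ENNReal.ofReal_one ▸ ENNReal.ofReal_le_ofReal ((one_le_div hd).2 hdC)

section Moments

variable {μ : Measure ℝ} [IsProbabilityMeasure μ]

lemma affine_pow_four_le (τ t a : ℝ) : (τ * t + a) ^ 4 ≤ 8 * τ ^ 4 * t ^ 4 + 8 * a ^ 4 := by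
  calc (τ * t + a) ^ 4 ≤ 2 ^ (4 - 1) * ((τ * t) ^ 4 + a ^ 4) := Even.add_pow_le (by decide)
    _ = 8 * τ ^ 4 * t ^ 4 + 8 * a ^ 4 := by ring

lemma integrable_affine_pow_four (h4 : Integrable (fun t : ℝ => t ^ 4) μ) (τ a : ℝ) :
    Integrable (fun t => (τ * t + a) ^ 4) μ :=
  ((h4.const_mul (8 * τ ^ 4)).add (integrable_const (8 * a ^ 4))).mono' (by fun_prop)
    (ae_of_all _ fun t => by
      rw [Real.norm_eq_abs, abs_of_nonneg (by positivity)]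
      exact affine_pow_four_le τ t a)

lemma memLp_affine_sq (h4 : Integrable (fun t : ℝ => t ^ 4) μ) (τ a : ℝ) :
    MemLp (fun t => (τ * t + a) ^ 2) 2 μ :=
  (memLp_two_iff_integrable_sq (by fun_prop)).2 <| by
    simpa only [← pow_mul] using integrable_affine_pow_four h4 τ a

lemma integral_affine_sq (hmean : ∫ t, t ∂μ = 0) (hvar : ∫ t, t ^ 2 ∂μ = 1) (τ a : ℝ) :
    ∫ t, (τ * t + a) ^ 2 ∂μ = τ ^ 2 + a ^ 2 := by
  have h2 : Integrable (fun t : ℝ => t ^ 2) μ := .of_integral_ne_zero (by simp [hvar])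
  have h1 : Integrable (fun t : ℝ => t) μ :=
    ((memLp_two_iff_integrable_sq aestronglyMeasurable_id).2 h2).integrable one_le_two
  have hexp : (fun t => (τ * t + a) ^ 2) = fun t => τ ^ 2 * t ^ 2 + 2 * τ * a * t + a ^ 2 := by
    ext t; ring
  rw [hexp, integral_add (f := fun t => τ ^ 2 * t ^ 2 + 2 * τ * a * t)
    ((h2.const_mul _).add (h1.const_mul _)) (integrable_const _),
    integral_add (h2.const_mul _) (h1.const_mul _), integral_const_mul, integral_const_mul,
    hvar, hmean]
  simp

lemma variance_affine_sq_le (h4 : Integrable (fun t : ℝ => t ^ 4) μ) (τ a : ℝ) :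
    Var[fun t => (τ * t + a) ^ 2; μ] ≤ 8 * (τ ^ 4 * ∫ t, t ^ 4 ∂μ + a ^ 4) :=
  calc Var[fun t => (τ * t + a) ^ 2; μ]
      ≤ ∫ t, (τ * t + a) ^ 4 ∂μ := by
        refine (variance_le_expectation_sq (by fun_prop)).trans_eq (integral_congr_ae ?_)
        exact ae_of_all _ fun t => by simp only [Pi.pow_apply]; ring
    _ ≤ ∫ t, (8 * τ ^ 4 * t ^ 4 + 8 * a ^ 4) ∂μ :=
        integral_mono (integrable_affine_pow_four h4 τ a)
          ((h4.const_mul _).add (integrable_const _)) (affine_pow_four_le τ · a)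
    _ = 8 * (τ ^ 4 * ∫ t, t ^ 4 ∂μ + a ^ 4) := by
        rw [integral_add (h4.const_mul _) (integrable_const _), integral_const_mul]
        simp; ring

theorem measure_pi_ge_abs_sum_affine_sq_sub_le {ι : Type*} [Fintype ι]
    (hmean : ∫ t, t ∂μ = 0) (hvar : ∫ t, t ^ 2 ∂μ = 1)
    (h4 : Integrable (fun t : ℝ => t ^ 4) μ) (τ : ℝ) {z : ι → ℝ} (hz : ∀ i, |z i| ≤ 1)
    {c : ℝ} (hc : 0 < c) :
    Measure.pi (fun _ : ι => μ) {δ | c ≤ |∑ i, (τ * δ i + z i) ^ 2 - ∑ i, (τ ^ 2 + z i ^ 2)|}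
      ≤ ENNReal.ofReal (Fintype.card ι * (8 * (τ ^ 4 * ∫ t, t ^ 4 ∂μ + 1)) / c ^ 2) := by
  simp_rw [← integral_affine_sq hmean hvar τ]
  refine (measure_pi_ge_le_sum_variance_div_sq (fun i => memLp_affine_sq h4 τ (z i)) hc).trans
    (ENNReal.ofReal_le_ofReal ?_)
  gcongr
  rw [← nsmul_eq_mul, ← Finset.card_univ]
  refine Finset.sum_le_card_nsmul _ _ _ fun i _ => (variance_affine_sq_le h4 τ (z i)).trans ?_
  have : z i ^ 4 ≤ 1 := by
    rw [← Even.pow_abs (by decide)]; exact pow_le_one₀ (abs_nonneg _) (hz i)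
  gcongr

end Moments

def normSqShell (d : ℕ) (r k : ℝ) : Set (Fin d → ℝ) :=
  {u | (∑ i, u i ^ 2) / d ∈ Set.Icc (r - k) (r + k)}

section Shell

variable {d : ℕ} {r k : ℝ}

lemma measurableSet_normSqShell : MeasurableSet (normSqShell d r k) :=
  measurableSet_Icc.preimage (by fun_prop)

lemma mem_normSqShell_iff (hd : 0 < d) {u : Fin d → ℝ} :
    u ∈ normSqShell d r k ↔ |∑ i, u i ^ 2 - d * r| ≤ d * k := by
  have hd' : (0 : ℝ) < d := by exact_mod_cast hd
  rw [normSqShell, Set.mem_ofPred_eq, Set.mem_Icc, le_div_iff₀ hd', div_le_iff₀ hd', abs_le]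
  constructor <;> rintro ⟨h₁, h₂⟩ <;> constructor <;> linarith

lemma setOf_smul_mem_normSqShell (σ : ℝ) :
    {δ | σ • δ ∈ normSqShell d (σ ^ 2) k}
      = {δ | (σ ^ 2 * ∑ i, δ i ^ 2) / d ∈ Set.Icc (σ ^ 2 - k) (σ ^ 2 + k)} := by
  simp [normSqShell, mul_pow, Finset.mul_sum]

lemma sub_le_abs_sum_affine_sq_sub_of_mem_normSqShell (hd : 0 < d) {σ τ : ℝ} {δ z : Fin d → ℝ}
    (h : τ • δ + z ∈ normSqShell d (σ ^ 2) k) :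
    d * |σ ^ 2 - τ ^ 2| - d * k - ∑ i, z i ^ 2
      ≤ |∑ i, (τ * δ i + z i) ^ 2 - ∑ i, (τ ^ 2 + z i ^ 2)| := by
  set X := ∑ i, (τ * δ i + z i) ^ 2
  set w := ∑ i, z i ^ 2
  rw [mem_normSqShell_iff hd] at h
  have hX : |X - d * σ ^ 2| ≤ d * k := by simpa using h
  have hsum : ∑ i, (τ ^ 2 + z i ^ 2) = d * τ ^ 2 + w := by simp [Finset.sum_add_distrib, w]
  have hgap : d * |σ ^ 2 - τ ^ 2| ≤ |X - d * σ ^ 2| + |X - (d * τ ^ 2 + w)| + w :=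
    calc d * |σ ^ 2 - τ ^ 2| = |(d * σ ^ 2 - X) + (X - (d * τ ^ 2 + w)) + w| := by
          rw [show d * σ ^ 2 - X + (X - (d * τ ^ 2 + w)) + w = d * (σ ^ 2 - τ ^ 2) by ring,
            abs_mul, Nat.abs_cast]
      _ ≤ |d * σ ^ 2 - X| + |X - (d * τ ^ 2 + w)| + |w| := abs_add_three _ _ _
      _ = |X - d * σ ^ 2| + |X - (d * τ ^ 2 + w)| + w := by
          rw [abs_sub_comm, abs_of_nonneg (by positivity : 0 ≤ w)]
  rw [hsum]
  linarith

end Shell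

section Concentration

variable {μ : Measure ℝ} [IsProbabilityMeasure μ] {d : ℕ}

lemma radius_lt_of_measure_pi_smul_mem_normSqShell (hmean : ∫ t, t ∂μ = 0)
    (hvar : ∫ t, t ^ 2 ∂μ = 1) (h4 : Integrable (fun t : ℝ => t ^ 4) μ) (hd : 0 < d)
    {σ p k a : ℝ} (hp₀ : 0 ≤ p) (hp₁ : p < 1)
    (hkp : Measure.pi (fun _ : Fin d => μ) {δ | σ • δ ∈ normSqShell d (σ ^ 2) k}
      = ENNReal.ofReal p)
    (ha : 0 < a) (hdlarge : 8 * (σ ^ 4 * ∫ t, t ^ 4 ∂μ + 1) / ((1 - p) * a ^ 2) < d) :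
    k < a := by
  by_contra! hak
  have hd' : (0 : ℝ) < d := by exact_mod_cast hd
  have hsub : {δ | σ • δ ∈ normSqShell d (σ ^ 2) k}ᶜ
      ⊆ {δ | d * a ≤ |∑ i, (σ * δ i + 0) ^ 2 - ∑ _i : Fin d, (σ ^ 2 + 0 ^ 2)|} := by
    intro δ hδ
    rw [Set.mem_compl_iff, Set.mem_ofPred_eq, mem_normSqShell_iff hd, not_le] at hδ
    have := mul_le_mul_of_nonneg_left hak hd'.le
    simp only [Set.mem_ofPred_eq, add_zero, zero_pow two_ne_zero, Finset.sum_const,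
      Finset.card_univ, Fintype.card_fin, nsmul_eq_mul]
    simp only [Pi.smul_apply, smul_eq_mul] at hδ
    linarith
  have hmeas : MeasurableSet {δ : Fin d → ℝ | σ • δ ∈ normSqShell d (σ ^ 2) k} :=
    measurable_const_smul σ measurableSet_normSqShell
  have hcompl := (measure_mono hsub).trans (measure_pi_ge_abs_sum_affine_sq_sub_le hmean hvar h4
    σ (z := fun _ => 0) (by simp) (by positivity))
  rw [prob_compl_eq_one_sub hmeas, hkp, ← ENNReal.ofReal_one, ← ENNReal.ofReal_sub _ hp₀,
    ENNReal.ofReal_le_ofReal_iff (by positivity), Fintype.card_fin,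
    le_div_iff₀ (by positivity)] at hcompl
  rw [div_lt_iff₀ (mul_pos (sub_pos.2 hp₁) (by positivity))] at hdlarge
  nlinarith [mul_lt_mul_of_pos_left hdlarge hd']

lemma measure_pi_affine_mem_normSqShell_le (hmean : ∫ t, t ∂μ = 0) (hvar : ∫ t, t ^ 2 ∂μ = 1)
    (h4 : Integrable (fun t : ℝ => t ^ 4) μ) (hd : 0 < d) {σ τ k : ℝ} {z : Fin d → ℝ}
    (hz : ∑ i, z i ^ 2 ≤ 1 / 4) (hk : k ≤ |σ ^ 2 - τ ^ 2| / 4)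
    (hdgap : 1 ≤ d * |σ ^ 2 - τ ^ 2|) :
    Measure.pi (fun _ : Fin d => μ) {δ | τ • δ + z ∈ normSqShell d (σ ^ 2) k}
      ≤ ENNReal.ofReal (32 * (τ ^ 4 * ∫ t, t ^ 4 ∂μ + 1) / |σ ^ 2 - τ ^ 2| ^ 2 / d) := by
  have hd' : (0 : ℝ) < d := by exact_mod_cast hd
  have hgap : 0 < |σ ^ 2 - τ ^ 2| := pos_of_mul_pos_right (by linarith) hd'.le
  have hz₁ : ∀ i, |z i| ≤ 1 := fun i => (sq_le_one_iff_abs_le_one _).1 <|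
    (Finset.single_le_sum (fun j _ => sq_nonneg (z j)) (Finset.mem_univ i)).trans (by linarith)
  calc _ ≤ Measure.pi (fun _ : Fin d => μ) {δ | d * |σ ^ 2 - τ ^ 2| / 2 ≤
        |∑ i, (τ * δ i + z i) ^ 2 - ∑ i, (τ ^ 2 + z i ^ 2)|} := measure_mono fun δ hδ => by
          have := mul_le_mul_of_nonneg_left hk hd'.le
          refine le_trans ?_ (sub_le_abs_sum_affine_sq_sub_of_mem_normSqShell hd hδ)
          linarith
    _ ≤ _ := measure_pi_ge_abs_sum_affine_sq_sub_le hmean hvar h4 τ hz₁ (by positivity)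
    _ = _ := by
      simp only [Fintype.card_fin]
      congr 1
      field_simp
      ring

end Concentration

theorem curse_of_dimensionality_measurable_set_version_general
    (μ : Measure ℝ) [IsProbabilityMeasure μ]
    (hmean : ∫ t, t ∂μ = 0) (hvar : ∫ t, t ^ 2 ∂μ = 1)
    (hint : Integrable (fun t : ℝ => t ^ 4) μ)
    (p σ τ ε : ℝ)
    (hp : p ∈ Set.Ioo (1 / 2 : ℝ) 1) (hσ : 0 < σ) (hτ : 0 < τ) (hστ : σ ≠ τ)
    (hε : ε ∈ Set.Ioc (0 : ℝ) (1 / 2))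
    (hk : ∀ d : ℕ, 1 ≤ d → ∃ k : ℝ, 0 ≤ k ∧
      (Measure.pi fun _ : Fin d => μ)
        {δ | (σ ^ 2 * ∑ i, (δ i) ^ 2) / (d : ℝ) ∈ Set.Icc (σ ^ 2 - k) (σ ^ 2 + k)}
        = ENNReal.ofReal p) :
    ∃ C : ℝ, 0 < C ∧ ∀ d : ℕ, 1 ≤ d → ∀ z : Fin d → ℝ,
      Real.sqrt (∑ i, (z i) ^ 2) ≤ ε →
      (⨅ U : {U : Set (Fin d → ℝ) // MeasurableSet U ∧
            (Measure.pi fun _ : Fin d => μ) {δ | σ • δ ∈ U} = ENNReal.ofReal p},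
          (Measure.pi fun _ : Fin d => μ) {δ | τ • δ + z ∈ U.1})
        ≤ ENNReal.ofReal (C / (d : ℝ)) := by
  have hp₀ : 0 ≤ p := by linarith [hp.1]
  have hp₁ : 0 < 1 - p := by linarith [hp.2]
  have hm₄ : 0 ≤ ∫ t, t ^ 4 ∂μ := integral_nonneg fun t => by positivity
  set gap := |σ ^ 2 - τ ^ 2|
  have hgap : 0 < gap :=
    abs_pos.2 (sub_ne_zero.2 fun h => hστ ((pow_left_inj₀ hσ.le hτ.le two_ne_zero).1 h))
  set D := 8 * (σ ^ 4 * ∫ t, t ^ 4 ∂μ + 1) / ((1 - p) * (gap / 4) ^ 2) + 1 / gap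
  have hD : 0 ≤ D := by positivity
  refine ⟨D + 32 * (τ ^ 4 * ∫ t, t ^ 4 ∂μ + 1) / gap ^ 2, by positivity, fun d hd z hz => ?_⟩
  obtain ⟨k, -, hkp⟩ := hk d hd
  rw [← setOf_smul_mem_normSqShell] at hkp
  refine (iInf_le _ ⟨normSqShell d (σ ^ 2) k, measurableSet_normSqShell, hkp⟩).trans ?_
  rcases le_or_gt (d : ℝ) D with hdD | hdD
  · exact prob_le_ofReal_div_of_le (by exact_mod_cast hd)
      (le_add_of_le_of_nonneg hdD (by positivity))
  have hk_small : k < gap / 4 :=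
    radius_lt_of_measure_pi_smul_mem_normSqShell hmean hvar hint hd hp₀ hp.2 hkp (by positivity)
      ((le_add_of_nonneg_right (by positivity)).trans_lt hdD)
  have hdgap : 1 < d * gap :=
    (div_lt_iff₀ hgap).1 ((le_add_of_nonneg_left (by positivity)).trans_lt hdD)
  have hw : ∑ i, z i ^ 2 ≤ 1 / 4 := by
    have := (Real.sqrt_le_left (by norm_num)).1 (hz.trans hε.2)
    norm_num at this ⊢
    exact this
  refine (measure_pi_affine_mem_normSqShell_le hmean hvar hint hd hw hk_small.le hdgap.le).trans
    (ENNReal.ofReal_le_ofReal ?_)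
  gcongr
  exact le_add_of_nonneg_left hD

/-- Measurable-set reformulation of Theorem 1. `δ : Fin d → ℝ` has law `μ^⊗d` with `μ` of
zero mean, unit variance and fourth moment `m₄`. Let `p ∈ (1/2, 1)`, `σ, τ > 0` with `σ ≠ τ`,
`ε ∈ (0, 1/2]`. Assume for every `d ≥ 1` there is `k ≥ 0` with
`ℙ(‖σδ‖₂²/d ∈ [σ² − k, σ² + k]) = p`. Then there is `C > 0` such that for every `d ≥ 1` and
every `z` with `‖z‖₂ ≤ ε`, the infimum over Borel sets `U` with `ℙ(σδ ∈ U) = p` of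
`ℙ(τδ + z ∈ U)` is at most `C/d`. -/
theorem curse_of_dimensionality_measurable_set_version
    (μ : Measure ℝ) [IsProbabilityMeasure μ]
    (hmean : ∫ t, t ∂μ = 0) (hvar : ∫ t, t ^ 2 ∂μ = 1)
    (hint : Integrable (fun t : ℝ => t ^ 4) μ)
    (m₄ : ℝ) (hm₄ : ∫ t, t ^ 4 ∂μ = m₄)
    (p σ τ ε : ℝ)
    (hp : p ∈ Set.Ioo (1 / 2 : ℝ) 1) (hσ : 0 < σ) (hτ : 0 < τ) (hστ : σ ≠ τ)
    (hε : ε ∈ Set.Ioc (0 : ℝ) (1 / 2))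
    (hk : ∀ d : ℕ, 1 ≤ d → ∃ k : ℝ, 0 ≤ k ∧
      (Measure.pi fun _ : Fin d => μ)
        {δ | (σ ^ 2 * ∑ i, (δ i) ^ 2) / (d : ℝ) ∈ Set.Icc (σ ^ 2 - k) (σ ^ 2 + k)}
        = ENNReal.ofReal p) :
    ∃ C : ℝ, 0 < C ∧ ∀ d : ℕ, 1 ≤ d → ∀ z : Fin d → ℝ,
      Real.sqrt (∑ i, (z i) ^ 2) ≤ ε →
      (⨅ U : {U : Set (Fin d → ℝ) // MeasurableSet U ∧
            (Measure.pi fun _ : Fin d => μ) {δ | σ • δ ∈ U} = ENNReal.ofReal p},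
          (Measure.pi fun _ : Fin d => μ) {δ | τ • δ + z ∈ U.1})
        ≤ ENNReal.ofReal (C / (d : ℝ)) :=
  curse_of_dimensionality_measurable_set_version_general μ hmean hvar hint p σ τ ε hp hσ hτ hστ hε
    hk
end
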